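/- arXiv:2404.02901 — 6 statements merged into one kernel-verified Lean document; each statement's English description precedes it below -/
import Mathlib

section
/- Let L(y,v) = (v − 1/(2y))² if y ≠ 0 and L(y,v) = +∞ if y = 0. Then for every Lipschitz function y : [0,1] → ℝ with y(0) = 0, the energy F(y) = ∫₀¹ L(y(t), y'(t)) dt equals +∞. -/
/-!
Lipschitz continuity and `y 0 = 0` give `|y t| ≤ C t` and `|y' t| ≤ C`. Near `0` the singular
term `1 / (2 y)` is then at least `1 / (2 C t)`, which swamps `y'`, so `L(y, y') ≥ (4 C t)⁻²`:
a lower bound that is not integrable at `0`.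
-/

open MeasureTheory Set

/-- The extended-valued Lagrangian `L(y,v) = (v - 1/(2y))²` if `y ≠ 0`, `+∞` if `y = 0`. -/
noncomputable def Lag (u v : ℝ) : ENNReal :=
  if u = 0 then ⊤ else ENNReal.ofReal ((v - 1 / (2 * u)) ^ 2)

/-- The energy `F(y) = ∫₀¹ L(y(t), y'(t)) dt` with values in `[0,+∞]`. -/
noncomputable def energyLag (y : ℝ → ℝ) : ENNReal :=
  ∫⁻ t in Set.Ioc (0 : ℝ) 1, Lag (y t) (deriv y t)

open scoped NNReal ENNReal

lemma lintegral_Ioc_zero_ofReal_rpow_eq_top {a s : ℝ} (ha : 0 < a) (hs : s ≤ -1) :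
    ∫⁻ t in Ioc 0 a, ENNReal.ofReal (t ^ s) = ∞ := by
  by_contra hfin
  have hint : IntegrableOn (fun t : ℝ ↦ t ^ s) (Ioc 0 a) := by
    refine ⟨(measurable_id.pow_const s).aestronglyMeasurable, ?_⟩
    rw [hasFiniteIntegral_iff_ofReal]
    · exact lt_top_iff_ne_top.2 hfin
    · filter_upwards [ae_restrict_mem measurableSet_Ioc] with t ht
      exact Real.rpow_nonneg ht.1.le s
  exact hs.not_gt
    ((intervalIntegral.integrableOn_Ioo_rpow_iff ha).1 (hint.mono_set Ioo_subset_Ioc_self))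

lemma lintegral_Ioc_zero_ofReal_div_sq_eq_top {a c : ℝ} (ha : 0 < a) (hc : c ≠ 0) :
    ∫⁻ t in Ioc 0 a, ENNReal.ofReal ((c / t) ^ 2) = ∞ := by
  have hfactor : EqOn (fun t ↦ ENNReal.ofReal ((c / t) ^ 2))
      (fun t ↦ ENNReal.ofReal (c ^ 2) * ENNReal.ofReal (t ^ (-2 : ℝ))) (Ioc 0 a) := by
    intro t ht
    dsimp only
    rw [← ENNReal.ofReal_mul (sq_nonneg c), Real.rpow_neg ht.1.le, Real.rpow_two, div_pow,
      div_eq_mul_inv]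
  rw [setLIntegral_congr_fun measurableSet_Ioc hfactor, lintegral_const_mul _ (by fun_prop),
    lintegral_Ioc_zero_ofReal_rpow_eq_top ha (by norm_num)]
  exact ENNReal.mul_top (by simpa using hc)

lemma abs_le_mul_sub_of_lipschitzOnWith_Icc {f : ℝ → ℝ} {K : ℝ≥0} {a b t : ℝ}
    (hf : LipschitzOnWith K f (Icc a b)) (hfa : f a = 0) (ht : t ∈ Icc a b) :
    |f t| ≤ K * (t - a) := by
  have := hf.dist_le_mul t ht a (left_mem_Icc.2 (ht.1.trans ht.2))
  rwa [Real.dist_eq, Real.dist_eq, hfa, sub_zero, abs_of_nonneg (sub_nonneg.2 ht.1)] at this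

lemma inv_div_le_abs_sub_one_div {u v C t : ℝ} (hC : 0 < C) (ht : 0 < t) (hu0 : u ≠ 0)
    (hu : |u| ≤ C * t) (hv : |v| ≤ C) (htC : 4 * C ^ 2 * t ≤ 1) :
    (4 * C)⁻¹ / t ≤ |v - 1 / (2 * u)| := by
  have hsing : (2 * C)⁻¹ / t ≤ |1 / (2 * u)| := by
    calc (2 * C)⁻¹ / t = 1 / (2 * (C * t)) := by field_simp
      _ ≤ 1 / (2 * |u|) := one_div_le_one_div_of_le (by positivity) (by linarith)
      _ = |1 / (2 * u)| := by rw [abs_div, abs_one, abs_mul, abs_two]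
  have hvsmall : C ≤ (4 * C)⁻¹ / t := by
    rw [le_div_iff₀ ht, ← one_div, le_div_iff₀ (by positivity)]
    nlinarith
  have hsplit : (2 * C)⁻¹ / t = (4 * C)⁻¹ / t + (4 * C)⁻¹ / t := by
    field_simp; ring
  have hrev := abs_sub_abs_le_abs_sub (1 / (2 * u)) v
  rw [abs_sub_comm] at hrev
  linarith

lemma ofReal_inv_div_sq_le_Lag {u v C t : ℝ} (hC : 0 < C) (ht : 0 < t)
    (hu : |u| ≤ C * t) (hv : |v| ≤ C) (htC : 4 * C ^ 2 * t ≤ 1) :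
    ENNReal.ofReal (((4 * C)⁻¹ / t) ^ 2) ≤ Lag u v := by
  by_cases hu0 : u = 0
  · simp [Lag, hu0]
  rw [Lag, if_neg hu0, ← sq_abs (v - _)]
  exact ENNReal.ofReal_le_ofReal
    (pow_le_pow_left₀ (by positivity) (inv_div_le_abs_sub_one_div hC ht hu0 hu hv htC) 2)

theorem lavrentiev_example_lipschitz_infinite_energy
    (y : ℝ → ℝ) (K : NNReal) (hy : LipschitzOnWith K y (Set.Icc (0 : ℝ) 1))
    (hy0 : y 0 = 0) :
    energyLag y = ⊤ := by
  -- `C = K + 1` stays positive when `K = 0`, and `C ≥ 1` puts `ε` inside `(0, 1)`.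
  set C : ℝ≥0 := K + 1 with hC
  have hC1 : (1 : ℝ) ≤ C := by simp [hC]
  have hyC : LipschitzOnWith C y (Icc 0 1) := hy.weaken (by simp [hC])
  set ε : ℝ := (4 * (C : ℝ) ^ 2)⁻¹
  have hε0 : 0 < ε := by positivity
  have hε1 : ε < 1 := inv_lt_one_of_one_lt₀ (by nlinarith)
  have hbound : ∀ t ∈ Ioc 0 ε,
      ENNReal.ofReal (((4 * (C : ℝ))⁻¹ / t) ^ 2) ≤ Lag (y t) (deriv y t) := by
    intro t ⟨ht0, htε⟩
    have ht1 : t < 1 := htε.trans_lt hε1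
    refine ofReal_inv_div_sq_le_Lag (by positivity) ht0 ?_ ?_ ?_
    · simpa using abs_le_mul_sub_of_lipschitzOnWith_Icc hyC hy0 ⟨ht0.le, ht1.le⟩
    · simpa using norm_deriv_le_of_lipschitzOn (Icc_mem_nhds ht0 ht1) hyC
    · calc 4 * (C : ℝ) ^ 2 * t ≤ 4 * C ^ 2 * ε := by gcongr
        _ = 1 := mul_inv_cancel₀ (by positivity)
  refine top_unique ?_
  calc ⊤ = ∫⁻ t in Ioc 0 ε, ENNReal.ofReal (((4 * (C : ℝ))⁻¹ / t) ^ 2) :=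
        (lintegral_Ioc_zero_ofReal_div_sq_eq_top hε0 (by positivity)).symm
    _ ≤ ∫⁻ t in Ioc 0 ε, Lag (y t) (deriv y t) := setLIntegral_mono' measurableSet_Ioc hbound
    _ ≤ energyLag y := lintegral_mono_set (Ioc_subset_Ioc_right hε1.le)
end

section
/- Let y : [0,1] → ℝ be Lipschitz with Lipschitz constant C > 0, and let 0 ≤ c < b ≤ 1 be such that y(t) ≠ 0 for all t ∈ [c,b]. Then ∫_c^b (y'(t) − 1/(2y(t)))² dt ≥ ln|y(c)| − ln|y(b)| + (1/(4C²(b−c)))·(ln|y(b)| − ln|y(c)|)². -/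
/-!
Put `g = log |y|` and `L = g b - g c`. Since `|y|` is bounded away from zero on `[c, b]`, `g` is
Lipschitz there, so the fundamental theorem of calculus for absolutely continuous functions
gives `∫ y'/y = L`. Pointwise,
`(y' - 1/(2y))² = y'² - y'/y + 1/(4y²) ≥ -y'/y + (y'/y)²/(4C²)` because `|y'| ≤ C` a.e.;
bounding `(y'/y)²` from below by its tangent line at `m = L/(b - c)` and integrating
yields `-L + L²/(4C²(b - c))`.
-/

open MeasureTheory Set
open scoped NNReal

theorem le_sq_sub_one_div_two_mul {a u C m : ℝ} (hC : 0 < C) (hu : u ≠ 0) (ha : |a| ≤ C) :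
    (m / (2 * C ^ 2) - 1) * (a / u) - m ^ 2 / (4 * C ^ 2) ≤ (a - 1 / (2 * u)) ^ 2 := by
  have hexpand : (a - 1 / (2 * u)) ^ 2 = a ^ 2 - a / u + 1 / (4 * u ^ 2) := by
    field_simp
    ring
  have hinv : (a / u) ^ 2 / (4 * C ^ 2) ≤ 1 / (4 * u ^ 2) := by
    rw [div_pow, div_div, div_le_div_iff₀ (by positivity) (by positivity)]
    have : a ^ 2 ≤ C ^ 2 := sq_le_sq' (abs_le.1 ha).1 (abs_le.1 ha).2
    nlinarith [sq_nonneg u, pow_pos hC 2]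
  have htangent : (2 * m * (a / u) - m ^ 2) / (4 * C ^ 2) ≤ (a / u) ^ 2 / (4 * C ^ 2) := by
    gcongr
    nlinarith [sq_nonneg (a / u - m)]
  have hregroup : (m / (2 * C ^ 2) - 1) * (a / u) - m ^ 2 / (4 * C ^ 2)
      = -(a / u) + (2 * m * (a / u) - m ^ 2) / (4 * C ^ 2) := by
    field_simp
    ring
  linarith [sq_nonneg a]

theorem abs_sub_one_div_two_mul_le {a u C ε : ℝ} (hε : 0 < ε) (ha : |a| ≤ C)
    (hu : ε ≤ |u|) :
    |a - 1 / (2 * u)| ≤ C + ε⁻¹ := by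
  have hinv : |1 / (2 * u)| ≤ ε⁻¹ := by
    rw [abs_div, abs_one, abs_mul, abs_two, div_le_iff₀ (by linarith), ← div_eq_inv_mul,
      le_div_iff₀ hε]
    linarith
  exact (abs_sub _ _).trans (add_le_add ha hinv)

theorem Real.lipschitzOnWith_log_Ici {ε : ℝ≥0} (hε : 0 < ε) :
    LipschitzOnWith ε⁻¹ Real.log (Ici (ε : ℝ)) := by
  refine (convex_Ici _).lipschitzOnWith_of_nnnorm_hasDerivWithin_le
    (fun x hx => (Real.hasDerivAt_log ((NNReal.coe_pos.2 hε).trans_le hx).ne').hasDerivWithinAt)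
    fun x hx => ?_
  have hx' : (ε : ℝ) ≤ x := hx
  rw [← NNReal.coe_le_coe, coe_nnnorm, norm_inv, Real.norm_of_nonneg (ε.2.trans hx'),
    NNReal.coe_inv]
  exact inv_anti₀ (NNReal.coe_pos.2 hε) hx'

theorem IsCompact.exists_pos_le_abs {X : Type*} [TopologicalSpace X] {s : Set X}
    (hs : IsCompact s) {f : X → ℝ} (hf : ContinuousOn f s) (hne : ∀ x ∈ s, f x ≠ 0) :
    ∃ ε : ℝ≥0, 0 < ε ∧ ∀ x ∈ s, ε ≤ |f x| := by
  rcases s.eq_empty_or_nonempty with rfl | hs_ne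
  · exact ⟨1, one_pos, by simp⟩
  obtain ⟨x₀, hx₀, hmin⟩ := hs.exists_isMinOn hs_ne hf.abs
  exact ⟨⟨|f x₀|, abs_nonneg _⟩, abs_pos.2 (hne x₀ hx₀), fun x hx => hmin hx⟩

namespace LipschitzOnWith

theorem log_abs {f : ℝ → ℝ} {K ε : ℝ≥0} {s : Set ℝ} (hf : LipschitzOnWith K f s)
    (hε : 0 < ε) (hfε : ∀ x ∈ s, ε ≤ |f x|) :
    LipschitzOnWith (ε⁻¹ * K) (fun x => Real.log |f x|) s := by
  have habs : LipschitzOnWith K (fun x => |f x|) s := by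
    simpa only [one_mul, Function.comp_def, Real.norm_eq_abs] using
      (lipschitzWith_one_norm (E := ℝ)).comp_lipschitzOnWith hf
  exact (Real.lipschitzOnWith_log_Ici hε).comp habs hfε

theorem ae_hasDerivAt_and_abs_deriv_le {f : ℝ → ℝ} {K : ℝ≥0} {a b : ℝ} (hab : a ≤ b)
    (hf : LipschitzOnWith K f (Icc a b)) :
    ∀ᵐ t ∂volume.restrict (Ioc a b),
      t ∈ Icc a b ∧ HasDerivAt f (deriv f t) t ∧ |deriv f t| ≤ K := by
  rw [← Measure.restrict_congr_set Ioo_ae_eq_Ioc, ae_restrict_iff' measurableSet_Ioo]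
  have hac : AbsolutelyContinuousOnInterval f a b := by
    rw [← uIcc_of_le hab] at hf
    exact hf.absolutelyContinuousOnInterval
  filter_upwards [hac.ae_differentiableAt] with t hdiff ht
  have htI : t ∈ Icc a b := Ioo_subset_Icc_self ht
  exact ⟨htI, (hdiff (uIcc_of_le hab ▸ htI)).hasDerivAt,
    norm_deriv_le_of_lipschitzOn (Icc_mem_nhds ht.1 ht.2) hf⟩

theorem log_abs_energy_estimate {y : ℝ → ℝ} {K : ℝ≥0} {c b : ℝ} (hK : 0 < K)
    (hcb : c < b) (hy : LipschitzOnWith K y (Icc c b)) (hne : ∀ t ∈ Icc c b, y t ≠ 0) :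
    Real.log |y c| - Real.log |y b|
        + 1 / (4 * (K : ℝ) ^ 2 * (b - c)) * (Real.log |y b| - Real.log |y c|) ^ 2
      ≤ ∫ t in c..b, (deriv y t - 1 / (2 * y t)) ^ 2 := by
  obtain ⟨ε, hε, hyε⟩ := isCompact_Icc.exists_pos_le_abs hy.continuousOn hne
  set g : ℝ → ℝ := fun t => Real.log |y t|
  set L := Real.log |y b| - Real.log |y c|
  set m := L / (b - c)
  have hg : AbsolutelyContinuousOnInterval g c b := by
    rw [← uIcc_of_le hcb.le] at hy hyε
    exact (hy.log_abs hε hyε).absolutelyContinuousOnInterval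
  have hpointwise : ∀ᵐ t ∂volume.restrict (Ioc c b),
      |deriv y t - 1 / (2 * y t)| ≤ K + ε⁻¹ ∧
      (m / (2 * K ^ 2) - 1) * deriv g t - m ^ 2 / (4 * K ^ 2)
        ≤ (deriv y t - 1 / (2 * y t)) ^ 2 := by
    filter_upwards [hy.ae_hasDerivAt_and_abs_deriv_le hcb.le] with t ⟨htI, hderiv, hbound⟩
    have hgt : deriv g t = deriv y t / y t := by
      simpa only [g, Real.log_abs] using (hderiv.log (hne t htI)).deriv
    exact ⟨abs_sub_one_div_two_mul_le (NNReal.coe_pos.2 hε) hbound (hyε t htI),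
      hgt ▸ le_sq_sub_one_div_two_mul (NNReal.coe_pos.2 hK) (hne t htI) hbound⟩
  have hint : IntervalIntegrable (fun t => (deriv y t - 1 / (2 * y t)) ^ 2) volume c b := by
    rw [intervalIntegrable_iff_integrableOn_Ioc_of_le hcb.le]
    have hymeas : AEMeasurable y (volume.restrict (Ioc c b)) :=
      (hy.continuousOn.aestronglyMeasurable measurableSet_Icc).aemeasurable.mono_measure
        (Measure.restrict_mono Ioc_subset_Icc_self le_rfl)
    refine Integrable.of_bound ?_ ((K + ε⁻¹) ^ 2) ?_
    · exact (((measurable_deriv y).aemeasurable.sub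
        (aemeasurable_const.div (aemeasurable_const.mul hymeas))).pow_const 2).aestronglyMeasurable
    · filter_upwards [hpointwise] with t ht
      rw [norm_pow, Real.norm_eq_abs]
      exact pow_le_pow_left₀ (abs_nonneg _) ht.1 2
  calc _ = ∫ t in c..b, ((m / (2 * K ^ 2) - 1) * deriv g t - m ^ 2 / (4 * K ^ 2)) := by
        rw [intervalIntegral.integral_sub (hg.intervalIntegrable_deriv.const_mul _)
          intervalIntegrable_const, intervalIntegral.integral_const_mul,
          hg.integral_deriv_eq_sub, intervalIntegral.integral_const, smul_eq_mul]
        have : b - c ≠ 0 := (sub_pos.2 hcb).ne'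
        simp only [g, m, L]
        field_simp
        ring
    _ ≤ _ := intervalIntegral.integral_mono_ae_restrict hcb.le
        ((hg.intervalIntegrable_deriv.const_mul _).sub intervalIntegrable_const) hint
        (by
          rw [← Measure.restrict_congr_set Ioc_ae_eq_Icc]
          exact hpointwise.mono fun _ ht => ht.2)

end LipschitzOnWith

theorem lipschitz_log_energy_estimate
    (y : ℝ → ℝ) (C : ℝ) (hC : 0 < C)
    (hy : ∀ s ∈ Set.Icc (0 : ℝ) 1, ∀ t ∈ Set.Icc (0 : ℝ) 1, |y t - y s| ≤ C * |t - s|)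
    (c b : ℝ) (hc : 0 ≤ c) (hcb : c < b) (hb : b ≤ 1)
    (hne : ∀ t ∈ Set.Icc c b, y t ≠ 0) :
    (∫ t in c..b, (deriv y t - 1 / (2 * y t)) ^ 2)
      ≥ Real.log |y c| - Real.log |y b|
        + 1 / (4 * C ^ 2 * (b - c)) * (Real.log |y b| - Real.log |y c|) ^ 2 := by
  have hsub : Icc c b ⊆ Icc 0 1 := Icc_subset_Icc hc hb
  have hlip : LipschitzOnWith (Real.toNNReal C) y (Icc c b) :=
    LipschitzOnWith.of_dist_le_mul fun t ht s hs => by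
      simpa only [Real.dist_eq, Real.coe_toNNReal _ hC.le] using hy s (hsub hs) t (hsub ht)
  simpa only [Real.coe_toNNReal _ hC.le] using
    hlip.log_abs_energy_estimate (Real.toNNReal_pos.2 hC) hcb hne
end

section
/- Let L : [a,b] × ℝ × ℝ → ℝ be of class C², with partial derivatives L_y and L_v with respect to the second and third variables. Let y_* : [a,b] → ℝ be of class C² with y_*(a) = A and y_*(b) = B, and suppose y_* minimizes F(y) = ∫ₐᵇ L(t, y(t), y'(t)) dt among all C² functions y : [a,b] → ℝ with y(a) = A and y(b) = B. Then y_* satisfies the Euler–Lagrange equation: for every t ∈ [a,b], (d/dt) L_v(t, y_*(t), y_*'(t)) = L_y(t, y_*(t), y_*'(t)). -/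
/-!
If `y` minimizes the action among curves with the same endpoints, then for every test function `η`
vanishing at `a` and `b` the real function `x ↦ F(y + x η)` has a minimum at `0`, so its derivative,
the first variation `∫ (η L_y + η' L_v)`, vanishes. Integrating by parts turns this into
`∫ η (L_y - (d/dt) L_v) = 0`, and since `L_y - (d/dt) L_v` is continuous along `y`, the fundamental
lemma of the calculus of variations forces it to vanish on `[a, b]`.
-/

open Set intervalIntegral MeasureTheory
open scoped ContDiff

def uncurry3 (L : ℝ → ℝ → ℝ → ℝ) : ℝ × ℝ × ℝ → ℝ := fun p => L p.1 p.2.1 p.2.2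

noncomputable def partialY (L : ℝ → ℝ → ℝ → ℝ) (t u v : ℝ) : ℝ := deriv (fun u => L t u v) u

noncomputable def partialV (L : ℝ → ℝ → ℝ → ℝ) (t u v : ℝ) : ℝ := deriv (fun v => L t u v) v

noncomputable def action (L : ℝ → ℝ → ℝ → ℝ) (a b : ℝ) (y : ℝ → ℝ) : ℝ :=
  ∫ t in a..b, L t (y t) (deriv y t)

noncomputable def firstVariation (L : ℝ → ℝ → ℝ → ℝ) (a b : ℝ) (y η : ℝ → ℝ) : ℝ :=
  ∫ t in a..b, (η t * partialY L t (y t) (deriv y t) + deriv η t * partialV L t (y t) (deriv y t))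

section Lagrangian

variable {L : ℝ → ℝ → ℝ → ℝ}

theorem hasDerivAt_lagrangian_fderiv {t x g' h' : ℝ} {g h : ℝ → ℝ}
    (hL : DifferentiableAt ℝ (uncurry3 L) (t, g x, h x))
    (hg : HasDerivAt g g' x) (hh : HasDerivAt h h' x) :
    HasDerivAt (fun x => L t (g x) (h x)) (fderiv ℝ (uncurry3 L) (t, g x, h x) (0, g', h')) x :=
  hL.hasFDerivAt.comp_hasDerivAt (f := fun x => ((t, g x, h x) : ℝ × ℝ × ℝ)) x
    ((hasDerivAt_const x t).prodMk (hg.prodMk hh))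

theorem partialY_eq_fderiv {t u v : ℝ} (hL : DifferentiableAt ℝ (uncurry3 L) (t, u, v)) :
    partialY L t u v = fderiv ℝ (uncurry3 L) (t, u, v) (0, 1, 0) :=
  (hasDerivAt_lagrangian_fderiv (g := id) hL (hasDerivAt_id u) (hasDerivAt_const u v)).deriv

theorem partialV_eq_fderiv {t u v : ℝ} (hL : DifferentiableAt ℝ (uncurry3 L) (t, u, v)) :
    partialV L t u v = fderiv ℝ (uncurry3 L) (t, u, v) (0, 0, 1) :=
  (hasDerivAt_lagrangian_fderiv (h := id) hL (hasDerivAt_const v u) (hasDerivAt_id v)).deriv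

theorem HasDerivAt.lagrangian {t x g' h' : ℝ} {g h : ℝ → ℝ}
    (hL : DifferentiableAt ℝ (uncurry3 L) (t, g x, h x))
    (hg : HasDerivAt g g' x) (hh : HasDerivAt h h' x) :
    HasDerivAt (fun x => L t (g x) (h x))
      (g' * partialY L t (g x) (h x) + h' * partialV L t (g x) (h x)) x := by
  convert hasDerivAt_lagrangian_fderiv hL hg hh using 1
  have hdir : ((0, g', h') : ℝ × ℝ × ℝ) = g' • (0, 1, 0) + h' • (0, 0, 1) := by simp
  rw [partialY_eq_fderiv hL, partialV_eq_fderiv hL, hdir, map_add, map_smul, map_smul,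
    smul_eq_mul, smul_eq_mul]

theorem ContDiff.uncurry3_partialY {m n : WithTop ℕ∞} (hL : ContDiff ℝ n (uncurry3 L))
    (hmn : m + 1 ≤ n) : ContDiff ℝ m (uncurry3 (partialY L)) := by
  have hdiff := hL.differentiable (one_pos.trans_le (le_add_self.trans hmn)).ne'
  have : uncurry3 (partialY L) = fun p => fderiv ℝ (uncurry3 L) p (0, 1, 0) :=
    funext fun p => partialY_eq_fderiv (hdiff p)
  exact this ▸ (hL.fderiv_right hmn).clm_apply contDiff_const

theorem ContDiff.uncurry3_partialV {m n : WithTop ℕ∞} (hL : ContDiff ℝ n (uncurry3 L))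
    (hmn : m + 1 ≤ n) : ContDiff ℝ m (uncurry3 (partialV L)) := by
  have hdiff := hL.differentiable (one_pos.trans_le (le_add_self.trans hmn)).ne'
  have : uncurry3 (partialV L) = fun p => fderiv ℝ (uncurry3 L) p (0, 0, 1) :=
    funext fun p => partialV_eq_fderiv (hdiff p)
  exact this ▸ (hL.fderiv_right hmn).clm_apply contDiff_const

end Lagrangian

theorem hasDerivAt_intervalIntegral_of_continuous_deriv {E : Type*} [NormedAddCommGroup E]
    [NormedSpace ℝ E] {F F' : ℝ → ℝ → E} {a b x₀ : ℝ}
    (hF : ∀ x, Continuous (F x)) (hF' : Continuous (Function.uncurry F'))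
    (hdiff : ∀ x t, HasDerivAt (fun x => F x t) (F' x t) x) :
    HasDerivAt (fun x => ∫ t in a..b, F x t) (∫ t in a..b, F' x₀ t) x₀ := by
  obtain ⟨C, hC⟩ := ((isCompact_closedBall x₀ 1).prod (isCompact_uIcc (a := a) (b := b)))
    |>.exists_bound_of_continuousOn hF'.continuousOn
  refine (hasDerivAt_integral_of_dominated_loc_of_deriv_le (bound := fun _ => C)
    (Metric.closedBall_mem_nhds x₀ one_pos)
    (.of_forall fun x => (hF x).aestronglyMeasurable) ((hF x₀).intervalIntegrable a b)
    (hF'.comp (Continuous.prodMk_right x₀)).aestronglyMeasurable ?_ intervalIntegrable_const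
    (.of_forall fun t _ x _ => hdiff x t)).2
  exact .of_forall fun t ht x hx => hC (x, t) ⟨hx, uIoc_subset_uIcc ht⟩

section FirstVariation

variable {L : ℝ → ℝ → ℝ → ℝ} {a b : ℝ} {y η : ℝ → ℝ}

theorem hasDerivAt_action_add_smul (hL : ContDiff ℝ 1 (uncurry3 L)) (hy : ContDiff ℝ 1 y)
    (hη : ContDiff ℝ 1 η) :
    HasDerivAt (fun x : ℝ => action L a b (y + x • η)) (firstVariation L a b y η) 0 := by
  have hη' := hη.continuous_deriv le_rfl
  have hcurve : Continuous fun q : ℝ × ℝ =>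
      ((q.2, y q.2 + q.1 * η q.2, deriv y q.2 + q.1 * deriv η q.2) : ℝ × ℝ × ℝ) := by
    have := hy.continuous_deriv le_rfl
    fun_prop
  have hderiv (x : ℝ) : deriv (y + x • η) = fun t => deriv y t + x * deriv η t :=
    funext fun t => ((hy.differentiable one_ne_zero t).hasDerivAt.add
      ((hη.differentiable one_ne_zero t).hasDerivAt.const_smul x)).deriv
  simp only [action, hderiv, Pi.add_apply, Pi.smul_apply, smul_eq_mul]
  refine (hasDerivAt_intervalIntegral_of_continuous_deriv
    (F := fun x t => L t (y t + x * η t) (deriv y t + x * deriv η t))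
    (F' := fun x t => η t * partialY L t (y t + x * η t) (deriv y t + x * deriv η t)
      + deriv η t * partialV L t (y t + x * η t) (deriv y t + x * deriv η t))
    (fun x => hL.continuous.comp (hcurve.comp (Continuous.prodMk_right x)))
    (((hη.continuous.comp continuous_snd).mul
        ((hL.uncurry3_partialY (m := 0) le_rfl).continuous.comp hcurve)).add
      ((hη'.comp continuous_snd).mul
        ((hL.uncurry3_partialV (m := 0) le_rfl).continuous.comp hcurve)))
    (fun x t => HasDerivAt.lagrangian (hL.differentiable one_ne_zero _)
      (by simpa using ((hasDerivAt_id x).mul_const (η t)).const_add (y t))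
      (by simpa using ((hasDerivAt_id x).mul_const (deriv η t)).const_add (deriv y t))))
    |>.congr_deriv (by simp [firstVariation])

theorem firstVariation_eq_zero_of_forall_action_le (hL : ContDiff ℝ 1 (uncurry3 L))
    (hy : ContDiff ℝ 1 y) (hη : ContDiff ℝ 1 η)
    (hmin : ∀ x : ℝ, action L a b y ≤ action L a b (y + x • η)) :
    firstVariation L a b y η = 0 :=
  IsLocalMin.hasDerivAt_eq_zero (.of_forall (by simpa using hmin))
    (hasDerivAt_action_add_smul hL hy hη)

theorem integral_mul_add_deriv_mul_eq_integral_mul_sub_deriv {P Q : ℝ → ℝ} (hP : Continuous P)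
    (hQ : ContDiff ℝ 1 Q) (hη : ContDiff ℝ 1 η) (ha : η a = 0) (hb : η b = 0) :
    ∫ t in a..b, (η t * P t + deriv η t * Q t) = ∫ t in a..b, η t * (P t - deriv Q t) := by
  have hη' := hη.continuous_deriv le_rfl
  have hQ' := hQ.continuous_deriv le_rfl
  have hparts : ∫ t in a..b, deriv η t * Q t = -∫ t in a..b, η t * deriv Q t := by
    simpa [ha, hb, mul_comm] using integral_mul_deriv_eq_deriv_mul
      (fun t _ => (hQ.differentiable one_ne_zero t).hasDerivAt)
      (fun t _ => (hη.differentiable one_ne_zero t).hasDerivAt)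
      (hQ'.intervalIntegrable a b) (hη'.intervalIntegrable a b)
  simp only [mul_sub]
  rw [intervalIntegral.integral_add, intervalIntegral.integral_sub, hparts, sub_eq_add_neg]
  all_goals apply Continuous.intervalIntegrable; fun_prop

end FirstVariation

theorem eqOn_Icc_zero_of_integral_contDiff_mul_eq_zero {f : ℝ → ℝ} {a b : ℝ} (hab : a < b)
    (hf : ContinuousOn f (Icc a b))
    (h : ∀ η : ℝ → ℝ, ContDiff ℝ ∞ η → HasCompactSupport η → tsupport η ⊆ Ioo a b →
      ∫ t in a..b, η t * f t = 0) :
    EqOn f 0 (Icc a b) := by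
  have hf' : ContinuousOn f (Ioo a b) := hf.mono Ioo_subset_Icc_self
  have hIoo : EqOn f 0 (Ioo a b) := by
    refine Measure.eqOn_open_of_ae_eq (μ := volume) ?_ isOpen_Ioo hf' continuousOn_const
    rw [Filter.EventuallyEq, ae_restrict_iff' measurableSet_Ioo]
    refine isOpen_Ioo.ae_eq_zero_of_integral_contDiff_smul_eq_zero
      (hf'.locallyIntegrableOn measurableSet_Ioo) fun η hη hηc hηU => ?_
    have hout : ∀ x ∉ Ioc a b, η x • f x = 0 := fun x hx => by
      rw [image_eq_zero_of_notMem_tsupport fun hx' => hx (Ioo_subset_Ioc_self (hηU hx')),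
        zero_smul]
    rw [← setIntegral_eq_integral_of_forall_compl_eq_zero hout, ← integral_of_le hab.le]
    exact h η hη hηc hηU
  exact hIoo.of_subset_closure hf continuousOn_const Ioo_subset_Icc_self (closure_Ioo hab.ne).ge

theorem euler_lagrange
    (a b A B : ℝ) (hab : a < b)
    (L : ℝ → ℝ → ℝ → ℝ)
    (hL : ContDiff ℝ 2 (fun p : ℝ × ℝ × ℝ => L p.1 p.2.1 p.2.2))
    (y : ℝ → ℝ) (hy : ContDiff ℝ 2 y) (hya : y a = A) (hyb : y b = B)
    (hmin : ∀ z : ℝ → ℝ, ContDiff ℝ 2 z → z a = A → z b = B →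
      (∫ t in a..b, L t (y t) (deriv y t)) ≤ ∫ t in a..b, L t (z t) (deriv z t)) :
    ∀ t ∈ Set.Icc a b,
      deriv (fun s => deriv (fun v => L s (y s) v) (deriv y s)) t
        = deriv (fun u => L t u (deriv y t)) (y t) := by
  have hy1 : ContDiff ℝ 1 y := hy.of_le one_le_two
  have hcurve : ContDiff ℝ 1 fun s => ((s, y s, deriv y s) : ℝ × ℝ × ℝ) :=
    contDiff_id.prodMk (hy1.prodMk (hy.iterate_deriv' 1 1))
  set P := fun s => partialY L s (y s) (deriv y s)
  set Q := fun s => partialV L s (y s) (deriv y s)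
  have hP : Continuous P :=
    (ContDiff.uncurry3_partialY (m := 0) hL (by norm_num)).continuous.comp hcurve.continuous
  have hQ : ContDiff ℝ 1 Q := (ContDiff.uncurry3_partialV hL (by norm_num)).comp hcurve
  have hEL : EqOn (fun s => P s - deriv Q s) 0 (Icc a b) := by
    refine eqOn_Icc_zero_of_integral_contDiff_mul_eq_zero hab
      (hP.sub (hQ.continuous_deriv le_rfl)).continuousOn fun η hη _ hsupp => ?_
    have hηa : η a = 0 := image_eq_zero_of_notMem_tsupport fun h => (hsupp h).1.false
    have hηb : η b = 0 := image_eq_zero_of_notMem_tsupport fun h => (hsupp h).2.false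
    have hη2 : ContDiff ℝ 2 η := hη.of_le (by norm_cast)
    rw [← integral_mul_add_deriv_mul_eq_integral_mul_sub_deriv hP hQ (hη2.of_le one_le_two)
      hηa hηb]
    refine firstVariation_eq_zero_of_forall_action_le (hL.of_le one_le_two) hy1
      (hη2.of_le one_le_two) fun x => hmin _ (hy.add (hη2.const_smul x)) ?_ ?_
    · simp [hya, hηa]
    · simp [hyb, hηb]
  exact fun t ht => (sub_eq_zero.mp (hEL ht)).symm
end

section
/- Let L : [a,b] × ℝ × ℝ → ℝ be of class C², with partial derivatives L_t, L_y, L_v. Let y_* : [a,b] → ℝ be of class C² with y_*(a) = A and y_*(b) = B, and suppose y_* minimizes F(y) = ∫ₐᵇ L(t, y(t), y'(t)) dt among all C² functions y : [a,b] → ℝ with y(a) = A and y(b) = B. Then y_* satisfies the Du Bois-Reymond equation: there exists a constant c ∈ ℝ such that for every t ∈ [a,b], L(t, y_*(t), y_*'(t)) − y_*'(t)·L_v(t, y_*(t), y_*'(t)) = c + ∫ₐᵗ L_t(s, y_*(s), y_*'(s)) ds. -/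
open Set intervalIntegral MeasureTheory
open scoped ContDiff

/-!
Along a minimiser, the first variation vanishes; integrating by parts and applying the fundamental
lemma of the calculus of variations gives the Euler–Lagrange equation `L_y = (L_v)'`. By the chain
rule the energy `E = L - y' L_v` along the minimiser has derivative `L_t + y' (L_y - (L_v)')`,
which is `L_t` by the Euler–Lagrange equation, and integrating `E' = L_t` over `[a, t]` gives the
claim.
-/

theorem hasDerivAt_intervalIntegral_of_continuous {E : Type*} [NormedAddCommGroup E]
    [NormedSpace ℝ E] {Φ Φ' : ℝ → ℝ → E} {a b x₀ : ℝ}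
    (hΦ : Continuous (Function.uncurry Φ)) (hΦ' : Continuous (Function.uncurry Φ'))
    (hd : ∀ x t, HasDerivAt (Φ · t) (Φ' x t) x) :
    HasDerivAt (fun x => ∫ t in a..b, Φ x t) (∫ t in a..b, Φ' x₀ t) x₀ := by
  obtain ⟨C, hC⟩ := ((isCompact_closedBall x₀ 1).prod isCompact_uIcc).exists_bound_of_continuousOn
    hΦ'.continuousOn
  have hslice : ∀ {Ψ : ℝ → ℝ → E}, Continuous (Function.uncurry Ψ) → ∀ x, Continuous (Ψ x) :=
    fun h x => h.comp (continuous_const.prodMk continuous_id)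
  refine (hasDerivAt_integral_of_dominated_loc_of_deriv_le (bound := fun _ => C)
    (Metric.ball_mem_nhds x₀ one_pos)
    (.of_forall fun x => (hslice hΦ x).aestronglyMeasurable)
    ((hslice hΦ x₀).intervalIntegrable _ _) (hslice hΦ' x₀).aestronglyMeasurable
    (.of_forall fun t ht x hx => hC (x, t) ⟨Metric.ball_subset_closedBall hx, uIoc_subset_uIcc ht⟩)
    intervalIntegrable_const (.of_forall fun t _ x _ => hd x t)).2

theorem eqOn_zero_of_forall_intervalIntegral_mul_eq_zero {a b : ℝ} (hab : a < b) {g : ℝ → ℝ}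
    (hg : ContinuousOn g (Icc a b))
    (h : ∀ η : ℝ → ℝ, ContDiff ℝ ∞ η → η a = 0 → η b = 0 → ∫ t in a..b, g t * η t = 0) :
    EqOn g 0 (Icc a b) := by
  have hgIoo : ContinuousOn g (Ioo a b) := hg.mono Ioo_subset_Icc_self
  have hae : ∀ᵐ t, t ∈ Ioo a b → g t = 0 := by
    refine isOpen_Ioo.ae_eq_zero_of_integral_contDiff_smul_eq_zero
      (hgIoo.locallyIntegrableOn isOpen_Ioo.measurableSet) fun η hη _ hsupp => ?_
    have hout : ∀ t ∉ Ioo a b, η t = 0 := fun t ht =>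
      image_eq_zero_of_notMem_tsupport fun h => ht (hsupp h)
    have hend : a ∉ Ioo a b ∧ b ∉ Ioo a b := by simp
    calc ∫ t, η t • g t = ∫ t in Ioc a b, η t • g t :=
          (setIntegral_eq_integral_of_forall_compl_eq_zero fun t ht => by
            rw [hout t fun h => ht (Ioo_subset_Ioc_self h), zero_smul]).symm
      _ = ∫ t in a..b, g t * η t := by
          rw [integral_of_le hab.le]; simp only [smul_eq_mul, mul_comm]
      _ = 0 := h η hη (hout a hend.1) (hout b hend.2)
  have hIoo : EqOn g 0 (Ioo a b) :=
    Measure.eqOn_open_of_ae_eq ((ae_restrict_iff' measurableSet_Ioo).2 hae) isOpen_Ioo hgIoo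
      continuousOn_const
  exact hIoo.of_subset_closure hg continuousOn_const Ioo_subset_Icc_self
    (closure_Ioo hab.ne).ge

namespace Lagrangian

variable (F : ℝ × ℝ × ℝ → ℝ)

noncomputable def partialT (p : ℝ × ℝ × ℝ) : ℝ := fderiv ℝ F p (1, 0, 0)

noncomputable def partialY (p : ℝ × ℝ × ℝ) : ℝ := fderiv ℝ F p (0, 1, 0)

noncomputable def partialV (p : ℝ × ℝ × ℝ) : ℝ := fderiv ℝ F p (0, 0, 1)

noncomputable def jet (y : ℝ → ℝ) (t : ℝ) : ℝ × ℝ × ℝ := (t, y t, deriv y t)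

noncomputable def energy (y : ℝ → ℝ) (t : ℝ) : ℝ :=
  F (jet y t) - deriv y t * partialV F (jet y t)

noncomputable def action (a b : ℝ) (y : ℝ → ℝ) : ℝ := ∫ t in a..b, F (jet y t)

variable {F}

theorem fderiv_apply_eq_partials (p : ℝ × ℝ × ℝ) (c₁ c₂ c₃ : ℝ) :
    fderiv ℝ F p (c₁, c₂, c₃) = c₁ * partialT F p + c₂ * partialY F p + c₃ * partialV F p := by
  have hc : ((c₁, c₂, c₃) : ℝ × ℝ × ℝ) = c₁ • (1, 0, 0) + c₂ • (0, 1, 0) + c₃ • (0, 0, 1) := by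
    simp
  rw [hc, map_add, map_add, map_smul, map_smul, map_smul]
  rfl

theorem hasDerivAt_partialT {t u v : ℝ} (hF : DifferentiableAt ℝ F (t, u, v)) :
    HasDerivAt (fun τ => F (τ, u, v)) (partialT F (t, u, v)) t :=
  hF.hasFDerivAt.comp_hasDerivAt t
    ((hasDerivAt_id t).prodMk ((hasDerivAt_const t u).prodMk (hasDerivAt_const t v)))

theorem hasDerivAt_partialV {t u v : ℝ} (hF : DifferentiableAt ℝ F (t, u, v)) :
    HasDerivAt (fun w => F (t, u, w)) (partialV F (t, u, v)) v :=
  hF.hasFDerivAt.comp_hasDerivAt v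
    ((hasDerivAt_const v t).prodMk ((hasDerivAt_const v u).prodMk (hasDerivAt_id v)))

theorem continuous_partialT (hF : ContDiff ℝ 1 F) : Continuous (partialT F) :=
  (hF.continuous_fderiv one_ne_zero).clm_apply continuous_const

theorem continuous_partialY (hF : ContDiff ℝ 1 F) : Continuous (partialY F) :=
  (hF.continuous_fderiv one_ne_zero).clm_apply continuous_const

theorem contDiff_partialV (hF : ContDiff ℝ 2 F) : ContDiff ℝ 1 (partialV F) :=
  (hF.fderiv_right le_rfl).clm_apply contDiff_const

theorem contDiff_jet {y : ℝ → ℝ} (hy : ContDiff ℝ 2 y) : ContDiff ℝ 1 (jet y) :=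
  contDiff_id.prodMk ((hy.of_le one_le_two).prodMk (hy.deriv' (n := 1)))

theorem hasDerivAt_jet {y : ℝ → ℝ} (hy : ContDiff ℝ 2 y) (t : ℝ) :
    HasDerivAt (jet y) (1, deriv y t, deriv (deriv y) t) t :=
  (hasDerivAt_id t).prodMk ((hy.differentiable two_ne_zero t).hasDerivAt.prodMk
    ((hy.deriv' (n := 1)).differentiable one_ne_zero t).hasDerivAt)

theorem jet_add_smul {y η : ℝ → ℝ} (hy : Differentiable ℝ y) (hη : Differentiable ℝ η)
    (x t : ℝ) : jet (y + x • η) t = (t, y t + x * η t, deriv y t + x * deriv η t) := by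
  simp [jet, deriv_add (hy t) ((hη t).const_smul x), deriv_const_smul x (hη t)]

theorem hasDerivAt_action_add_smul {a b : ℝ} {y η : ℝ → ℝ} (hF : ContDiff ℝ 1 F)
    (hy : ContDiff ℝ 1 y) (hη : ContDiff ℝ 1 η) :
    HasDerivAt (fun x : ℝ => action F a b (y + x • η))
      (∫ t in a..b, η t * partialY F (jet y t) + deriv η t * partialV F (jet y t)) 0 := by
  set u : ℝ → ℝ → ℝ × ℝ × ℝ := fun x t => (t, y t + x * η t, deriv y t + x * deriv η t)
  have hu : Continuous (Function.uncurry u) := by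
    have := hy.continuous_deriv le_rfl
    have := hη.continuous_deriv le_rfl
    have := hy.continuous
    have := hη.continuous
    simp only [u, Function.uncurry_def]
    fun_prop
  have hd : ∀ x t, HasDerivAt (fun x => F (u x t)) (fderiv ℝ F (u x t) (0, η t, deriv η t)) x :=
    fun x t => (hF.differentiable one_ne_zero _).hasFDerivAt.comp_hasDerivAt x
      ((hasDerivAt_const x t).prodMk (((hasDerivAt_mul_const (η t)).const_add (y t)).prodMk
          ((hasDerivAt_mul_const (deriv η t)).const_add (deriv y t))))
  have hu0 : ∀ t, u 0 t = jet y t := fun t => by simp [u, jet]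
  have hvar := hasDerivAt_intervalIntegral_of_continuous (a := a) (b := b) (x₀ := 0)
    (Φ := fun x t => F (u x t)) (hF.continuous.comp hu)
    (Φ' := fun x t => fderiv ℝ F (u x t) (0, η t, deriv η t))
    ((hF.continuous_fderiv one_ne_zero).comp hu |>.clm_apply (by fun_prop)) hd
  have haction : (fun x : ℝ => action F a b (y + x • η)) = fun x => ∫ t in a..b, F (u x t) := by
    funext x
    simp only [action, u,
      jet_add_smul (hy.differentiable one_ne_zero) (hη.differentiable one_ne_zero)]
  simpa only [haction, hu0, fderiv_apply_eq_partials, zero_mul, zero_add] using hvar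

theorem euler_lagrange {a b : ℝ} {y : ℝ → ℝ} (hab : a < b) (hF : ContDiff ℝ 2 F)
    (hy : ContDiff ℝ 2 y)
    (hmin : ∀ η : ℝ → ℝ, ContDiff ℝ 2 η → η a = 0 → η b = 0 →
      action F a b y ≤ action F a b (y + η)) :
    ∀ t ∈ Icc a b, partialY F (jet y t) = deriv (fun s => partialV F (jet y s)) t := by
  set P := fun s => partialV F (jet y s)
  have hF1 : ContDiff ℝ 1 F := hF.of_le one_le_two
  have hP : ContDiff ℝ 1 P := (contDiff_partialV hF).comp (contDiff_jet hy)
  have hP' : Continuous (deriv P) := hP.continuous_deriv le_rfl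
  have hLy : Continuous fun s => partialY F (jet y s) :=
    (continuous_partialY hF1).comp (contDiff_jet hy).continuous
  suffices EqOn (fun s => partialY F (jet y s) - deriv P s) 0 (Icc a b) from
    fun t ht => sub_eq_zero.1 (this ht)
  refine eqOn_zero_of_forall_intervalIntegral_mul_eq_zero hab (hLy.sub hP').continuousOn
    fun η hη ha hb => ?_
  have hη2 : ContDiff ℝ 2 η := hη.of_le (WithTop.coe_le_coe.2 le_top)
  have hη1 : ContDiff ℝ 1 η := hη2.of_le one_le_two
  have hη' : Continuous (deriv η) := hη1.continuous_deriv le_rfl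
  have hfirst : ∫ t in a..b, η t * partialY F (jet y t) + deriv η t * P t = 0 := by
    refine IsLocalMin.hasDerivAt_eq_zero (.of_forall fun x => ?_)
      (hasDerivAt_action_add_smul hF1 (hy.of_le one_le_two) hη1)
    simpa using hmin (x • η) (contDiff_const.smul hη2) (by simp [ha]) (by simp [hb])
  have hparts : ∫ t in a..b, deriv P t * η t + P t * deriv η t = 0 := by
    rw [integral_deriv_mul_eq_sub (fun t _ => (hP.differentiable one_ne_zero t).hasDerivAt)
      (fun t _ => (hη1.differentiable one_ne_zero t).hasDerivAt) (hP'.intervalIntegrable _ _)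
      (hη'.intervalIntegrable _ _), ha, hb, mul_zero, mul_zero, sub_zero]
  calc ∫ t in a..b, (partialY F (jet y t) - deriv P t) * η t
      = (∫ t in a..b, η t * partialY F (jet y t) + deriv η t * P t)
          - ∫ t in a..b, deriv P t * η t + P t * deriv η t := by
        have := hη1.continuous
        have := hP.continuous
        rw [← intervalIntegral.integral_sub (Continuous.intervalIntegrable (by fun_prop) _ _)
          (Continuous.intervalIntegrable (by fun_prop) _ _)]
        exact integral_congr fun t _ => by ring
    _ = 0 := by rw [hfirst, hparts, sub_zero]

theorem hasDerivAt_energy {y : ℝ → ℝ} (hF : ContDiff ℝ 2 F) (hy : ContDiff ℝ 2 y) (t : ℝ) :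
    HasDerivAt (energy F y) (partialT F (jet y t) +
      deriv y t * (partialY F (jet y t) - deriv (fun s => partialV F (jet y s)) t)) t := by
  have hP : Differentiable ℝ fun s => partialV F (jet y s) :=
    ((contDiff_partialV hF).comp (contDiff_jet hy)).differentiable one_ne_zero
  have hFjet :=
    (hF.differentiable two_ne_zero _).hasFDerivAt.comp_hasDerivAt t (hasDerivAt_jet hy t)
  have hy' := ((hy.deriv' (n := 1)).differentiable one_ne_zero t).hasDerivAt
  refine (hFjet.sub (hy'.mul (hP t).hasDerivAt)).congr_deriv ?_
  rw [fderiv_apply_eq_partials]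
  simp only [partialV, jet]
  ring

theorem exists_energy_eq_add_integral_partialT {a b : ℝ} {y : ℝ → ℝ} (hab : a < b)
    (hF : ContDiff ℝ 2 F) (hy : ContDiff ℝ 2 y)
    (hmin : ∀ η : ℝ → ℝ, ContDiff ℝ 2 η → η a = 0 → η b = 0 →
      action F a b y ≤ action F a b (y + η)) :
    ∃ c : ℝ, ∀ t ∈ Icc a b, energy F y t = c + ∫ s in a..t, partialT F (jet y s) := by
  set G := fun t => energy F y t - ∫ s in a..t, partialT F (jet y s)
  have hG : ∀ t ∈ Icc a b, HasDerivAt G 0 t := fun t ht => by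
    have hLt : Continuous fun s => partialT F (jet y s) :=
      (continuous_partialT (hF.of_le one_le_two)).comp (contDiff_jet hy).continuous
    refine ((hasDerivAt_energy hF hy t).sub
      (hLt.integral_hasStrictDerivAt a t).hasDerivAt).congr_deriv ?_
    rw [euler_lagrange hab hF hy hmin t ht]
    ring
  refine ⟨G a, fun t ht => ?_⟩
  have hGt : G t = G a := constant_of_has_deriv_right_zero
    (fun s hs => (hG s hs).continuousAt.continuousWithinAt)
    (fun s hs => (hG s (Ico_subset_Icc_self hs)).hasDerivWithinAt) t ht
  simp only [G] at hGt
  linarith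

end Lagrangian

open Lagrangian

theorem du_bois_reymond
    (a b A B : ℝ) (hab : a < b)
    (L : ℝ → ℝ → ℝ → ℝ)
    (hL : ContDiff ℝ 2 (fun p : ℝ × ℝ × ℝ => L p.1 p.2.1 p.2.2))
    (y : ℝ → ℝ) (hy : ContDiff ℝ 2 y) (hya : y a = A) (hyb : y b = B)
    (hmin : ∀ z : ℝ → ℝ, ContDiff ℝ 2 z → z a = A → z b = B →
      (∫ t in a..b, L t (y t) (deriv y t)) ≤ ∫ t in a..b, L t (z t) (deriv z t)) :
    ∃ c : ℝ, ∀ t ∈ Set.Icc a b,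
      L t (y t) (deriv y t)
          - deriv y t * deriv (fun v => L t (y t) v) (deriv y t)
        = c + ∫ s in a..t, deriv (fun τ => L τ (y s) (deriv y s)) s := by
  set F : ℝ × ℝ × ℝ → ℝ := fun p => L p.1 p.2.1 p.2.2
  have hFd : Differentiable ℝ F := hL.differentiable two_ne_zero
  obtain ⟨c, hc⟩ := exists_energy_eq_add_integral_partialT hab hL hy fun η hη ha hb =>
    hmin (y + η) (hy.add hη) (by simp [hya, ha]) (by simp [hyb, hb])
  refine ⟨c, fun t ht => ?_⟩
  have hLv : deriv (fun v => L t (y t) v) (deriv y t) = partialV F (jet y t) :=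
    (hasDerivAt_partialV (hFd _)).deriv
  have hLt : ∫ s in a..t, deriv (fun τ => L τ (y s) (deriv y s)) s
      = ∫ s in a..t, partialT F (jet y s) :=
    integral_congr fun s _ => (hasDerivAt_partialT (hFd _)).deriv
  rw [hLv, hLt]
  exact hc t ht
end

section
/- In Manià's example with F(y) = ∫₀¹ (y(t)³ − t)² · y'(t)⁶ dt, if y : [0,1] → ℝ is absolutely continuous with y(0) = 0, y(1) = 1 and F(y) = 0, then y(t) = t^{1/3} for all t ∈ [0,1]; in particular, no Lipschitz function y with y(0) = 0 and y(1) = 1 satisfies F(y) = 0. -/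
/-!
Where `F(y) = 0`, almost every `t` has `y(t)³ = t` or `y'(t) = 0`. If `y(t₀)³ ≠ t₀`, take the
maximal open interval `(a, b) ∋ t₀` on which `y³ ≠ t`: there `y' = 0` a.e., so the absolutely
continuous `y` is constant on `[a, b]`, while `y(a)³ = a` and `y(b)³ = b`; hence `a = b`, which is
absurd. So `y = t^{1/3}`, which is not Lipschitz since `t^{1/3} / t → ∞` as `t → 0⁺`.
-/

open MeasureTheory Set

/-- Manià's functional `F(y) = ∫₀¹ (y³ - t)² y'⁶ dt` with values in `[0,+∞]`. -/
noncomputable def maniaEnergy (y : ℝ → ℝ) : ENNReal :=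
  ∫⁻ t in Set.Ioc (0 : ℝ) 1, ENNReal.ofReal ((y t ^ 3 - t) ^ 2 * deriv y t ^ 6)

/-- `y` is absolutely continuous on `[0,1]`: it is the integral of a Lebesgue
integrable function. -/
def AbsCont (y : ℝ → ℝ) : Prop :=
  ∃ f : ℝ → ℝ, MeasureTheory.IntegrableOn f (Set.Icc (0 : ℝ) 1) ∧
    ∀ t ∈ Set.Icc (0 : ℝ) 1, y t = y 0 + ∫ s in (0 : ℝ)..t, f s

open Filter

theorem AbsolutelyContinuousOnInterval.congr {X : Type*} [PseudoMetricSpace X] {f g : ℝ → X}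
    {a b : ℝ} (hf : AbsolutelyContinuousOnInterval f a b) (hfg : EqOn f g (uIcc a b)) :
    AbsolutelyContinuousOnInterval g a b := by
  refine hf.congr' (eventually_inf_principal.2 (Eventually.of_forall fun E hE => ?_))
  exact Finset.sum_congr rfl fun i hi => by rw [hfg (hE.1 i hi).1, hfg (hE.1 i hi).2]

theorem LipschitzOnWith.congr {α β : Type*} [PseudoEMetricSpace α] [PseudoEMetricSpace β]
    {K : NNReal} {f g : α → β} {s : Set α} (hf : LipschitzOnWith K f s) (hfg : EqOn f g s) :
    LipschitzOnWith K g s := fun _ hx _ hy => hfg hx ▸ hfg hy ▸ hf hx hy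

theorem AbsCont.absolutelyContinuousOnInterval {y : ℝ → ℝ} (hy : AbsCont y) :
    AbsolutelyContinuousOnInterval y 0 1 := by
  obtain ⟨f, hf, hrep⟩ := hy
  have hf' : IntervalIntegrable f volume 0 1 :=
    (hf.mono_set (uIcc_of_le zero_le_one).subset).intervalIntegrable
  refine ((LipschitzWith.const (y 0)).lipschitzOnWith.absolutelyContinuousOnInterval.fun_add
    (hf'.absolutelyContinuousOnInterval_intervalIntegral left_mem_uIcc)).congr ?_
  rw [uIcc_of_le zero_le_one]
  exact fun t ht => (hrep t ht).symm

theorem AbsolutelyContinuousOnInterval.eq_of_ae_deriv_eq_zero {y : ℝ → ℝ} {a b : ℝ}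
    (hy : AbsolutelyContinuousOnInterval y a b) (hab : a ≤ b)
    (h : ∀ᵐ t, t ∈ Ioo a b → deriv y t = 0) : y a = y b := by
  have hint : ∫ t in a..b, deriv y t = 0 := by
    rw [intervalIntegral.integral_of_le hab, integral_Ioc_eq_integral_Ioo]
    exact integral_eq_zero_of_ae ((ae_restrict_iff' measurableSet_Ioo).2 h)
  linarith [hy.integral_deriv_eq_sub]

theorem IsClosed.exists_Ioo_disjoint {Z : Set ℝ} (hZ : IsClosed Z) {a b t : ℝ} (ha : a ∈ Z)
    (hb : b ∈ Z) (ht : t ∈ Icc a b) :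
    ∃ a' ∈ Z ∩ Icc a t, ∃ b' ∈ Z ∩ Icc t b, Disjoint (Ioo a' b') Z := by
  have hA : IsCompact (Z ∩ Icc a t) := isCompact_Icc.inter_left hZ
  have hB : IsCompact (Z ∩ Icc t b) := isCompact_Icc.inter_left hZ
  have ha' := hA.sSup_mem ⟨a, ha, left_mem_Icc.2 ht.1⟩
  have hb' := hB.sInf_mem ⟨b, hb, right_mem_Icc.2 ht.2⟩
  refine ⟨_, ha', _, hb', disjoint_left.2 fun s hs hsZ => ?_⟩
  rcases le_total s t with hst | hts
  · exact hs.1.not_ge (le_csSup hA.bddAbove ⟨hsZ, ha'.2.1.trans hs.1.le, hst⟩)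
  · exact hs.2.not_ge (csInf_le hB.bddBelow ⟨hsZ, hts, hs.2.le.trans hb'.2.2⟩)

theorem AbsolutelyContinuousOnInterval.eqOn_of_ae_eq_or_deriv_eq_zero {y c : ℝ → ℝ}
    {a b : ℝ} (hy : AbsolutelyContinuousOnInterval y a b) (hc : ContinuousOn c (Icc a b))
    (hinj : InjOn c (Icc a b)) (hab : a ≤ b) (ha : y a = c a) (hb : y b = c b)
    (h : ∀ᵐ t, t ∈ Ioo a b → y t = c t ∨ deriv y t = 0) : EqOn y c (Icc a b) := by
  intro t ht
  by_contra hne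
  have hyc : ContinuousOn (fun s => y s - c s) (Icc a b) :=
    (uIcc_of_le hab ▸ hy.continuousOn).sub hc
  set Z := Icc a b ∩ (fun s => y s - c s) ⁻¹' {0}
  have hZ : IsClosed Z := hyc.preimage_isClosed_of_isClosed isClosed_Icc isClosed_singleton
  have hmemZ {s} : s ∈ Z ↔ s ∈ Icc a b ∧ y s = c s := by simp [Z, sub_eq_zero]
  obtain ⟨a', ha', b', hb', hgap⟩ := hZ.exists_Ioo_disjoint
    (hmemZ.2 ⟨left_mem_Icc.2 hab, ha⟩) (hmemZ.2 ⟨right_mem_Icc.2 hab, hb⟩) ht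
  have hsub : Icc a' b' ⊆ Icc a b := Icc_subset_Icc ha'.2.1 hb'.2.2
  have hconst : y a' = y b' := by
    refine (hy.mono ?_).eq_of_ae_deriv_eq_zero (ha'.2.2.trans hb'.2.1) ?_
    · rw [uIcc_of_le hab, uIcc_of_le (ha'.2.2.trans hb'.2.1)]
      exact hsub
    · filter_upwards [h] with s hs hs'
      refine (hs (Ioo_subset_Ioo ha'.2.1 hb'.2.2 hs')).resolve_left fun hys => ?_
      exact disjoint_left.1 hgap hs' (hmemZ.2 ⟨hsub (Ioo_subset_Icc_self hs'), hys⟩)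
  have ha'b' : a' = b' := hinj (hmemZ.1 ha'.1).1 (hmemZ.1 hb'.1).1
    (by rw [← (hmemZ.1 ha'.1).2, ← (hmemZ.1 hb'.1).2, hconst])
  have hta' : t = a' := le_antisymm (ha'b' ▸ hb'.2.1) ha'.2.2
  exact hne (hta' ▸ (hmemZ.1 ha'.1).2)

theorem eq_rpow_one_third_of_pow_three_eq {x t : ℝ} (ht : 0 ≤ t) (h : x ^ 3 = t) :
    x = t ^ ((1 : ℝ) / 3) := by
  have hx : 0 ≤ x := (Odd.pow_nonneg_iff (by decide)).1 (h ▸ ht)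
  rw [← h, one_div]
  exact_mod_cast (Real.pow_rpow_inv_natCast hx three_ne_zero).symm

theorem ae_eq_rpow_or_deriv_eq_zero_of_maniaEnergy_eq_zero {y : ℝ → ℝ}
    (hy : ContinuousOn y (Ioc 0 1)) (hE : maniaEnergy y = 0) :
    ∀ᵐ t, t ∈ Ioo 0 1 → y t = t ^ ((1 : ℝ) / 3) ∨ deriv y t = 0 := by
  have hmeas : AEMeasurable (fun t => ENNReal.ofReal ((y t ^ 3 - t) ^ 2 * deriv y t ^ 6))
      (volume.restrict (Ioc 0 1)) := by
    have := hy.aemeasurable (μ := volume) measurableSet_Ioc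
    have := measurable_deriv y
    fun_prop
  have hzero := (lintegral_eq_zero_iff' hmeas).1 hE
  rw [EventuallyEq, ae_restrict_iff' measurableSet_Ioc] at hzero
  filter_upwards [hzero] with t ht htI
  have hle := ENNReal.ofReal_eq_zero.1 (ht (Ioo_subset_Ioc_self htI))
  rcases mul_eq_zero.1 (le_antisymm hle (by positivity)) with h | h
  · exact .inl (eq_rpow_one_third_of_pow_three_eq htI.1.le
      (sub_eq_zero.1 (pow_eq_zero_iff two_ne_zero |>.1 h)))
  · exact .inr (pow_eq_zero_iff (by norm_num) |>.1 h)

theorem eqOn_rpow_one_third_of_maniaEnergy_eq_zero {y : ℝ → ℝ}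
    (hy : AbsolutelyContinuousOnInterval y 0 1) (h0 : y 0 = 0) (h1 : y 1 = 1)
    (hE : maniaEnergy y = 0) : EqOn y (fun t => t ^ ((1 : ℝ) / 3)) (Icc 0 1) := by
  have hcont : ContinuousOn y (Icc 0 1) := uIcc_of_le zero_le_one (α := ℝ) ▸ hy.continuousOn
  refine hy.eqOn_of_ae_eq_or_deriv_eq_zero (Real.continuous_rpow_const (by norm_num)).continuousOn
    ((Real.rpow_left_injOn (by norm_num)).mono fun t ht => ht.1) zero_le_one ?_ ?_
    (ae_eq_rpow_or_deriv_eq_zero_of_maniaEnergy_eq_zero (hcont.mono Ioc_subset_Icc_self) hE)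
  · simp [h0]
  · simp [h1]

theorem Real.not_lipschitzOnWith_rpow_Icc_zero_one {p : ℝ} (hp0 : 0 < p) (hp1 : p < 1)
    (K : NNReal) : ¬ LipschitzOnWith K (fun t : ℝ => t ^ p) (Icc 0 1) := by
  intro hK
  -- `t ^ (p - 1) = K + 1` makes `t ^ p` exceed `K * t`.
  set t : ℝ := (K + 1 : ℝ) ^ (p - 1)⁻¹
  have ht0 : 0 < t := by positivity
  have ht1 : t ≤ 1 := Real.rpow_le_one_of_one_le_of_nonpos (by simp) (by simp; linarith)
  have hpow : t ^ (p - 1) = K + 1 := by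
    rw [← Real.rpow_mul (by positivity), inv_mul_cancel₀ (by linarith), Real.rpow_one]
  have hlip := hK.dist_le_mul t ⟨ht0.le, ht1⟩ 0 ⟨le_rfl, zero_le_one⟩
  rw [Real.dist_eq, Real.dist_eq, Real.zero_rpow hp0.ne', sub_zero, sub_zero,
    abs_of_pos (by positivity), abs_of_pos ht0] at hlip
  have : t ^ p = (K + 1) * t := by
    rw [← hpow, ← Real.rpow_add_one ht0.ne', sub_add_cancel]
  nlinarith

theorem mania_unique_minimizer_no_lipschitz :
    (∀ y : ℝ → ℝ, AbsCont y → y 0 = 0 → y 1 = 1 → maniaEnergy y = 0 →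
      ∀ t ∈ Set.Icc (0 : ℝ) 1, y t = t ^ ((1 : ℝ) / 3)) ∧
    ¬ ∃ y : ℝ → ℝ, (∃ K : NNReal, LipschitzOnWith K y (Set.Icc (0 : ℝ) 1)) ∧
      y 0 = 0 ∧ y 1 = 1 ∧ maniaEnergy y = 0 := by
  refine ⟨fun y hy h0 h1 hE => eqOn_rpow_one_third_of_maniaEnergy_eq_zero
    hy.absolutelyContinuousOnInterval h0 h1 hE, ?_⟩
  rintro ⟨y, ⟨K, hK⟩, h0, h1, hE⟩
  have hy : AbsolutelyContinuousOnInterval y 0 1 :=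
    LipschitzOnWith.absolutelyContinuousOnInterval (uIcc_of_le (zero_le_one (α := ℝ)) ▸ hK)
  exact Real.not_lipschitzOnWith_rpow_Icc_zero_one (p := 1 / 3) (by norm_num) (by norm_num) K
    (hK.congr (eqOn_rpow_one_third_of_maniaEnergy_eq_zero hy h0 h1 hE))
end

section
/- Let F(y) = ∫₀¹ ((y'(t)² − 1)² + y(t)²) dt. The infimum of F over absolutely continuous functions y : [0,1] → ℝ with y(0) = 0 and y(1) = 0 equals 0; indeed, for each n ≥ 2 the 'sawtooth' function y_n with y_n(0) = 0 and y_n' = 1 on [2k/(2n), (2k+1)/(2n)) and y_n' = −1 on [(2k+1)/(2n), (2k+2)/(2n)) for k = 0,…,n−1 is Lipschitz, satisfies the boundary conditions, and F(y_n) ≤ 1/(4n²). -/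
open MeasureTheory Set

/-- The functional `F(y) = ∫₀¹ ((y'² - 1)² + y²) dt` with values in `[0,+∞]`. -/
noncomputable def energyST (y : ℝ → ℝ) : ENNReal :=
  ∫⁻ t in Set.Ioc (0 : ℝ) 1, ENNReal.ofReal ((deriv y t ^ 2 - 1) ^ 2 + y t ^ 2)

/-- The sawtooth with `n` teeth: the distance from `t` to the nearest multiple of `1/n`;
it satisfies `y_n(0) = 0`, `y_n' = 1` on each `[2k/(2n), (2k+1)/(2n))` and `y_n' = -1`
on each `[(2k+1)/(2n), (2k+2)/(2n))`, `k = 0,…,n-1`. -/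
noncomputable def sawtooth (n : ℕ) (t : ℝ) : ℝ :=
  |t - (round ((n : ℝ) * t) : ℤ) / (n : ℝ)|

/-!
The sawtooth `y_n` is the norm on `AddCircle (1/n)`, i.e. the distance to the lattice `(1/n)ℤ`,
so it is `1`-Lipschitz (hence absolutely continuous) and bounded by `1/(2n)`. Off the countable
set `(1/(2n))ℤ` it agrees near `t` with `|s - c|` for a lattice point `c ≠ t`, so `y_n'² = 1`
almost everywhere and the integrand reduces to `y_n² ≤ 1/(4n²)`, which tends to `0`.
-/

open Filter Topology

theorem Int.floor_eventuallyEq {α : Type*} [Ring α] [LinearOrder α] [FloorRing α]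
    [TopologicalSpace α] [OrderTopology α] {x : α} (hx : x ∉ Set.range ((↑) : ℤ → α)) :
    (fun y => ⌊y⌋) =ᶠ[𝓝 x] fun _ => ⌊x⌋ := by
  have hlt : (⌊x⌋ : α) < x := (Int.floor_le x).lt_of_ne fun h => hx ⟨_, h⟩
  filter_upwards [Ioo_mem_nhds hlt (Int.lt_floor_add_one x)] with y hy
  exact Int.floor_eq_on_Ico _ y (Ioo_subset_Ico_self hy)

theorem round_eventuallyEq {α : Type*} [Field α] [LinearOrder α] [IsStrictOrderedRing α]
    [FloorRing α] [TopologicalSpace α] [OrderTopology α] {x : α}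
    (hx : x + 1 / 2 ∉ Set.range ((↑) : ℤ → α)) :
    (fun y => round y) =ᶠ[𝓝 x] fun _ => round x := by
  simpa only [round_eq, Function.comp_def] using
    (Int.floor_eventuallyEq hx).comp_tendsto ((continuous_add_const (1 / 2 : α)).tendsto x)

theorem AbsolutelyContinuousOnInterval.absCont {y : ℝ → ℝ}
    (hy : AbsolutelyContinuousOnInterval y 0 1) : AbsCont y := by
  refine ⟨deriv y, ?_, fun t ht => ?_⟩
  · rw [integrableOn_Icc_iff_integrableOn_Ioc]
    exact (intervalIntegrable_iff_integrableOn_Ioc_of_le zero_le_one).mp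
      hy.intervalIntegrable_deriv
  · rw [(hy.mono (uIcc_subset_uIcc (by simp) (by simp [ht.1, ht.2]))).integral_deriv_eq_sub]
    ring

theorem energyST_le_of_sq_deriv_eq_one {y : ℝ → ℝ} {ε : ℝ}
    (hy' : ∀ᵐ t ∂volume.restrict (Ioc 0 1), deriv y t ^ 2 = 1)
    (hy : ∀ t, |y t| ≤ ε) : energyST y ≤ ENNReal.ofReal (ε ^ 2) := by
  calc energyST y ≤ ∫⁻ _ in Ioc (0 : ℝ) 1, ENNReal.ofReal (ε ^ 2) := by
        refine lintegral_mono_ae (hy'.mono fun t ht => ENNReal.ofReal_le_ofReal ?_)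
        rw [ht, sub_self, zero_pow two_ne_zero, zero_add]
        exact sq_le_sq' (abs_le.mp (hy t)).1 (abs_le.mp (hy t)).2
    _ = ENNReal.ofReal (ε ^ 2) := by simp

theorem sawtooth_eq_norm_coe (n : ℕ) (t : ℝ) :
    sawtooth n t = ‖(t : AddCircle (n : ℝ)⁻¹)‖ := by
  rw [AddCircle.norm_eq, inv_inv, sawtooth, div_eq_mul_inv]

theorem lipschitzWith_sawtooth (n : ℕ) : LipschitzWith 1 (sawtooth n) := by
  refine LipschitzWith.of_dist_le_mul fun s t => ?_
  simp only [sawtooth_eq_norm_coe, NNReal.coe_one, one_mul]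
  calc dist ‖(s : AddCircle (n : ℝ)⁻¹)‖ ‖(t : AddCircle (n : ℝ)⁻¹)‖
      ≤ ‖((s - t : ℝ) : AddCircle (n : ℝ)⁻¹)‖ := by
        rw [AddCircle.coe_sub]; exact dist_norm_norm_le _ _
    _ ≤ dist s t := QuotientAddGroup.norm_mk_le_norm

theorem abs_sawtooth_le {n : ℕ} (hn : n ≠ 0) (t : ℝ) : |sawtooth n t| ≤ 1 / (2 * n) := by
  rw [sawtooth_eq_norm_coe, abs_norm]
  refine (AddCircle.norm_le_half_period _ (by positivity)).trans_eq ?_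
  rw [abs_of_pos (by positivity)]
  field_simp

theorem sawtooth_zero (n : ℕ) : sawtooth n 0 = 0 := by
  simp [sawtooth]

theorem sawtooth_one {n : ℕ} (hn : n ≠ 0) : sawtooth n 1 = 0 := by
  simp [sawtooth, hn]

theorem sq_deriv_sawtooth {n : ℕ} {t : ℝ} (ht : ∀ k : ℤ, 2 * n * t ≠ k) :
    deriv (sawtooth n) t ^ 2 = 1 := by
  have hround : (n : ℝ) * t + 1 / 2 ∉ Set.range ((↑) : ℤ → ℝ) := by
    rintro ⟨k, hk⟩
    exact ht (2 * k - 1) (by push_cast; linarith)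
  have hn : (n : ℝ) ≠ 0 := by
    intro h
    exact ht 0 (by simp [h])
  have hne : t - round (n * t) / n ≠ 0 := by
    intro h
    refine ht (2 * round (n * t)) ?_
    rw [sub_eq_zero, eq_div_iff hn] at h
    push_cast
    linarith
  have hloc : sawtooth n =ᶠ[𝓝 t] fun s => |s - round (n * t) / n| := by
    filter_upwards [(round_eventuallyEq hround).comp_tendsto
      ((continuous_const_mul (n : ℝ)).tendsto t)] with s hs
    simp only [Function.comp_apply] at hs
    rw [sawtooth, hs]
  rw [hloc.deriv_eq, deriv_comp_sub_const, deriv_abs]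
  rcases hne.lt_or_gt with h | h <;> simp [h]

theorem absCont_sawtooth (n : ℕ) : AbsCont (sawtooth n) :=
  (lipschitzWith_sawtooth n).lipschitzOnWith.absolutelyContinuousOnInterval.absCont

theorem ae_sq_deriv_sawtooth {n : ℕ} (hn : n ≠ 0) : ∀ᵐ t, deriv (sawtooth n) t ^ 2 = 1 := by
  have hnull : volume (Set.range fun k : ℤ => (k : ℝ) / (2 * n)) = 0 :=
    (Set.countable_range _).measure_zero _
  filter_upwards [compl_mem_ae_iff.mpr hnull] with t ht
  refine sq_deriv_sawtooth fun k hk => ht ⟨k, ?_⟩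
  simp only [← hk]
  field_simp

theorem energyST_sawtooth_le {n : ℕ} (hn : n ≠ 0) :
    energyST (sawtooth n) ≤ ENNReal.ofReal (1 / (4 * n ^ 2)) := by
  convert energyST_le_of_sq_deriv_eq_one (ae_restrict_of_ae (ae_sq_deriv_sawtooth hn))
    (abs_sawtooth_le hn) using 2
  field_simp
  ring

theorem sawtooth_infimum_zero :
    sInf {e : ENNReal | ∃ y : ℝ → ℝ, AbsCont y ∧
        y 0 = 0 ∧ y 1 = 0 ∧ e = energyST y} = 0 ∧
    ∀ n : ℕ, 2 ≤ n →
      (∃ K : NNReal, LipschitzOnWith K (sawtooth n) (Set.Icc (0 : ℝ) 1)) ∧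
      sawtooth n 0 = 0 ∧ sawtooth n 1 = 0 ∧
      energyST (sawtooth n) ≤ ENNReal.ofReal (1 / (4 * n ^ 2)) := by
  have hmem (n : ℕ) (hn : n ≠ 0) : energyST (sawtooth n) ∈
      {e : ENNReal | ∃ y : ℝ → ℝ, AbsCont y ∧ y 0 = 0 ∧ y 1 = 0 ∧ e = energyST y} :=
    ⟨sawtooth n, absCont_sawtooth n, sawtooth_zero n, sawtooth_one hn, rfl⟩
  have hbound : Tendsto (fun n : ℕ => ENNReal.ofReal (1 / (4 * n ^ 2))) atTop (𝓝 0) := by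
    rw [← ENNReal.ofReal_zero]
    refine ENNReal.tendsto_ofReal <| tendsto_const_nhds.div_atTop ?_
    exact ((tendsto_pow_atTop two_ne_zero).comp tendsto_natCast_atTop_atTop).const_mul_atTop
      four_pos
  refine ⟨le_antisymm (ge_of_tendsto hbound ?_) bot_le, fun n hn => ?_⟩
  · filter_upwards [eventually_ne_atTop 0] with n hn
    exact (sInf_le (hmem n hn)).trans (energyST_sawtooth_le hn)
  · have hn : n ≠ 0 := by omega
    exact ⟨⟨1, (lipschitzWith_sawtooth n).lipschitzOnWith⟩, sawtooth_zero n, sawtooth_one hn,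
      energyST_sawtooth_le hn⟩
end
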